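/- arXiv:1902.06191 — 3 statements merged into one kernel-verified Lean document; each statement's English description precedes it below -/
import Mathlib

section
/- Let V be a real inner product space, J : V → V a linear map with ⟨JX, JY⟩ = ⟨X, Y⟩ for all X, Y and J² = −id, W ⊆ V a finite-dimensional subspace, and for X ∈ W write JX = TX + FX where TX is the orthogonal projection of JX onto W and FX = JX − TX. If W is slant with slant angle θ, i.e. T(TX) = −(cos²θ)X for all X ∈ W, then ⟨FX, FY⟩ = (sin²θ)⟨X, Y⟩ for all X, Y ∈ W; in particular ‖FX‖ = (sin θ)‖X‖ for θ ∈ [0, π/2]. -/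
open RealInnerProductSpace

/-- Write `J X = T X + F X` with `T X` the orthogonal projection of
`J X` onto `W` and `F X = J X - T X`. If `W` is slant with slant angle `θ`
(i.e. `T (T X) = -(cos²θ) • X` for all `X ∈ W`), then `⟪F X, F Y⟫ = (sin²θ) ⟪X, Y⟫`
for all `X, Y ∈ W`; in particular `‖F X‖ = (sin θ) ‖X‖` when `θ ∈ [0, π/2]`. -/
theorem slant_inner_normal_part
    (V : Type*) [NormedAddCommGroup V] [InnerProductSpace ℝ V]
    (J : V →ₗ[ℝ] V)
    (hJorth : ∀ X Y : V, ⟪J X, J Y⟫ = ⟪X, Y⟫)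
    (hJsq : ∀ X : V, J (J X) = -X)
    (W : Submodule ℝ V) [FiniteDimensional ℝ W]
    (T F : V → V)
    (hT : ∀ X : V, T X = (W.orthogonalProjectionOnto (J X) : V))
    (hF : ∀ X : V, F X = J X - T X)
    (θ : ℝ)
    (hslant : ∀ X ∈ W, T (T X) = -((Real.cos θ) ^ 2 • X)) :
    (∀ X ∈ W, ∀ Y ∈ W, ⟪F X, F Y⟫ = (Real.sin θ) ^ 2 * ⟪X, Y⟫) ∧
      (θ ∈ Set.Icc 0 (Real.pi / 2) → ∀ X ∈ W, ‖F X‖ = Real.sin θ * ‖X‖) := by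
  have hTW : ∀ X : V, T X ∈ W := fun X => by
    rw [hT]; exact (W.orthogonalProjectionOnto (J X)).2
  have hFperp : ∀ X : V, ∀ w ∈ W, ⟪F X, w⟫ = 0 := by
    intro X w hw
    have : F X ∈ Wᗮ := by
      rw [hF, hT]; exact W.sub_starProjection_mem_orthogonal (J X)
    exact real_inner_comm (F X) w ▸ this w hw
  have key : ∀ X ∈ W, ∀ Y ∈ W, ⟪F X, F Y⟫ = (Real.sin θ) ^ 2 * ⟪X, Y⟫ := by
    intro X hX Y hY
    have h1 : ⟪F X, F Y⟫ = ⟪F X, J Y⟫ := by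
      rw [hF Y, inner_sub_right, hFperp X (T Y) (hTW Y), sub_zero]
    have h2 : ⟪T X, J Y⟫ = (Real.cos θ) ^ 2 * ⟪X, Y⟫ := by
      have hTX : T X = -J (J (T X)) := by rw [hJsq, neg_neg]
      calc ⟪T X, J Y⟫ = ⟪-J (J (T X)), J Y⟫ := by rw [← hTX]
        _ = -⟪J (J (T X)), J Y⟫ := by rw [inner_neg_left]
        _ = -⟪J (T X), Y⟫ := by rw [hJorth]
        _ = -⟪T (T X) + F (T X), Y⟫ := by rw [hF (T X), add_sub_cancel]
        _ = -(⟪T (T X), Y⟫ + ⟪F (T X), Y⟫) := by rw [inner_add_left]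
        _ = -⟪T (T X), Y⟫ := by rw [hFperp (T X) Y hY]; ring
        _ = -⟪-((Real.cos θ) ^ 2 • X), Y⟫ := by rw [hslant X hX]
        _ = (Real.cos θ) ^ 2 * ⟪X, Y⟫ := by
            rw [inner_neg_left, real_inner_smul_left]; ring
    have h3 : ⟪F X, J Y⟫ = ⟪X, Y⟫ - (Real.cos θ) ^ 2 * ⟪X, Y⟫ := by
      rw [hF X, inner_sub_left, hJorth, h2]
    rw [h1, h3]
    have hs : (Real.sin θ) ^ 2 = 1 - (Real.cos θ) ^ 2 := by
      nlinarith [Real.sin_sq_add_cos_sq θ]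
    rw [hs]; ring
  refine ⟨key, fun hθ X hX => ?_⟩
  have hsin : 0 ≤ Real.sin θ := Real.sin_nonneg_of_nonneg_of_le_pi hθ.1
    (le_trans hθ.2 (by linarith [Real.pi_pos]))
  have h4 : ‖F X‖ ^ 2 = (Real.sin θ * ‖X‖) ^ 2 := by
    rw [← real_inner_self_eq_norm_sq, key X hX X hX, real_inner_self_eq_norm_sq]
    ring
  nlinarith [norm_nonneg (F X), norm_nonneg X, h4, mul_nonneg hsin (norm_nonneg X)]
end

section
/- Let V be a real inner product space, J : V → V a linear map with ⟨JX, JY⟩ = ⟨X, Y⟩ for all X, Y and J² = −id, W ⊆ V a finite-dimensional subspace, and for X ∈ W write JX = TX + FX where TX is the orthogonal projection of JX onto W and FX = JX − TX. Suppose W is slant with slant angle θ ∈ (0, π/2), i.e. T(TX) = −(cos²θ)X for all X ∈ W. If e₁, …, e_q ∈ W is an orthonormal family with the additional property that ⟨e_i, T e_j⟩ = 0 for all i, j, then the family of 2q vectors (csc θ) F e₁, …, (csc θ) F e_q, (csc θ)(sec θ) F(T e₁), …, (csc θ)(sec θ) F(T e_q) is orthonormal in V. -/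
open RealInnerProductSpace

/-- Let `W` be slant with slant angle `θ ∈ (0, π/2)` (i.e.
`T (T X) = -(cos²θ) • X` for all `X ∈ W`, where `T X` is the orthogonal projection
of `J X` onto `W` and `F X = J X - T X`). If `e₁, …, e_q ∈ W` is an orthonormal
family with `⟪e i, T (e j)⟫ = 0` for all `i, j`, then the family of `2q` vectors
`(csc θ) • F (e i)` and `(csc θ)(sec θ) • F (T (e i))` is orthonormal in `V`. -/
theorem slant_adapted_normal_frame_orthonormal
    (V : Type*) [NormedAddCommGroup V] [InnerProductSpace ℝ V]
    (J : V →ₗ[ℝ] V)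
    (hJorth : ∀ X Y : V, ⟪J X, J Y⟫ = ⟪X, Y⟫)
    (hJsq : ∀ X : V, J (J X) = -X)
    (W : Submodule ℝ V) [FiniteDimensional ℝ W]
    (T F : V → V)
    (hT : ∀ X : V, T X = (W.orthogonalProjectionOnto (J X) : V))
    (hF : ∀ X : V, F X = J X - T X)
    (θ : ℝ) (hθ : θ ∈ Set.Ioo 0 (Real.pi / 2))
    (hslant : ∀ X ∈ W, T (T X) = -((Real.cos θ) ^ 2 • X))
    (q : ℕ) (e : Fin q → V)
    (heW : ∀ i, e i ∈ W)
    (heON : Orthonormal ℝ e)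
    (heT : ∀ i j, ⟪e i, T (e j)⟫ = 0) :
    Orthonormal ℝ
      (Sum.elim
        (fun i : Fin q => (Real.sin θ)⁻¹ • F (e i))
        (fun i : Fin q => ((Real.sin θ)⁻¹ * (Real.cos θ)⁻¹) • F (T (e i)))) := by
  obtain ⟨hθ0, hθ1⟩ := hθ
  have hsin : 0 < Real.sin θ :=
    Real.sin_pos_of_pos_of_lt_pi hθ0 (by linarith [Real.pi_pos])
  have hcos : 0 < Real.cos θ :=
    Real.cos_pos_of_mem_Ioo ⟨by linarith [Real.pi_pos], hθ1⟩
  -- T X ∈ W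
  have hTW : ∀ X : V, T X ∈ W := by
    intro X; rw [hT]; exact (W.orthogonalProjectionOnto (J X)).2
  -- F X ⊥ W
  have hFperp : ∀ X : V, ∀ w ∈ W, ⟪F X, w⟫ = 0 := by
    intro X w hw
    rw [hF X, hT X, real_inner_comm]
    exact (Submodule.mem_orthogonal W _).mp
      (Submodule.sub_starProjection_mem_orthogonal (K := W) (J X)) w hw
  have hFperp' : ∀ X : V, ∀ w ∈ W, ⟪w, F X⟫ = 0 := by
    intro X w hw; rw [real_inner_comm]; exact hFperp X w hw
  -- ⟪T X, T Y⟫ = cos²θ ⟪X, Y⟫ for X, Y ∈ W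
  have hTT : ∀ X, X ∈ W → ∀ Y, Y ∈ W → ⟪T X, T Y⟫ = Real.cos θ ^ 2 * ⟪X, Y⟫ := by
    intro X hX Y hY
    have hJY : J Y = T Y + F Y := by rw [hF]; abel
    have h1 : ⟪T X, J Y⟫ = ⟪T X, T Y⟫ := by
      rw [hJY, inner_add_right, hFperp' Y (T X) (hTW X), add_zero]
    have h2 : ⟪T X, J Y⟫ = -⟪J (T X), Y⟫ := by
      rw [← hJorth (T X) (J Y), hJsq, inner_neg_right]
    have h3 : ⟪J (T X), Y⟫ = ⟪T (T X), Y⟫ := by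
      have hJTX : J (T X) = T (T X) + F (T X) := by rw [hF]; abel
      rw [hJTX, inner_add_left, hFperp (T X) Y hY, add_zero]
    rw [← h1, h2, h3, hslant X hX, inner_neg_left, real_inner_smul_left, neg_neg]
  -- ⟪F X, F Y⟫ = sin²θ ⟪X, Y⟫ for X, Y ∈ W
  have hFF : ∀ X, X ∈ W → ∀ Y, Y ∈ W → ⟪F X, F Y⟫ = Real.sin θ ^ 2 * ⟪X, Y⟫ := by
    intro X hX Y hY
    have hJX : J X = T X + F X := by rw [hF]; abel
    have hJY : J Y = T Y + F Y := by rw [hF]; abel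
    have expand : ⟪X, Y⟫ = ⟪T X, T Y⟫ + ⟪F X, F Y⟫ := by
      have h := hJorth X Y
      rw [hJX, hJY, inner_add_left, inner_add_right, inner_add_right,
        hFperp' Y (T X) (hTW X), hFperp X (T Y) (hTW Y)] at h
      linarith
    have hTTv := hTT X hX Y hY
    have hsc : Real.sin θ ^ 2 = 1 - Real.cos θ ^ 2 := by
      have := Real.sin_sq_add_cos_sq θ; linarith
    rw [hsc]; linarith [expand]
  rw [orthonormal_iff_ite]
  rintro (i | i) (j | j) <;>
    simp only [Sum.elim_inl, Sum.elim_inr, real_inner_smul_left, real_inner_smul_right]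
  · rw [hFF (e i) (heW i) (e j) (heW j)]
    rcases eq_or_ne i j with h | h
    · subst h
      simp only [if_pos rfl, Sum.inl.injEq, if_true]
      have : ⟪e i, e i⟫ = (1 : ℝ) := by
        rw [real_inner_self_eq_norm_sq, heON.1 i]; norm_num
      rw [this]
      field_simp
    · rw [heON.2 h]
      simp [h]
  · rw [hFF (e i) (heW i) (T (e j)) (hTW (e j)), heT i j]
    simp
  · have hz : ⟪T (e i), e j⟫ = (0 : ℝ) := by rw [real_inner_comm]; exact heT j i
    rw [hFF (T (e i)) (hTW (e i)) (e j) (heW j), hz]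
    simp
  · rw [hFF (T (e i)) (hTW (e i)) (T (e j)) (hTW (e j)),
      hTT (e i) (heW i) (e j) (heW j)]
    rcases eq_or_ne i j with h | h
    · subst h
      simp only [Sum.inr.injEq, if_true, if_pos rfl]
      have : ⟪e i, e i⟫ = (1 : ℝ) := by
        rw [real_inner_self_eq_norm_sq, heON.1 i]; norm_num
      rw [this]
      field_simp
    · rw [heON.2 h]
      simp [h]
end

section
/- Let V be a real inner product space, J : V → V a linear map with ⟨JX, JY⟩ = ⟨X, Y⟩ for all X, Y and J² = −id, W ⊆ V a finite-dimensional subspace, and for X ∈ W let TX be the orthogonal projection of JX onto W. If W is slant with slant angle θ ∈ (0, π/2), i.e. T(TX) = −(cos²θ)X for all X ∈ W, then for every nonzero X ∈ W the angle between JX and its orthogonal projection TX onto W equals θ; that is, ⟨JX, TX⟩ = (cos θ)‖JX‖‖TX‖. -/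
open RealInnerProductSpace

/-- If `W` is slant with slant angle `θ ∈ (0, π/2)` (i.e.
`T (T X) = -(cos²θ) • X` for all `X ∈ W`, where `T X` is the orthogonal projection
of `J X` onto `W`), then for every nonzero `X ∈ W` the Wirtinger angle between
`J X` and `T X` equals `θ`: `⟪J X, T X⟫ = (cos θ) ‖J X‖ ‖T X‖`. -/
theorem slant_wirtinger_angle
    (V : Type*) [NormedAddCommGroup V] [InnerProductSpace ℝ V]
    (J : V →ₗ[ℝ] V)
    (hJorth : ∀ X Y : V, ⟪J X, J Y⟫ = ⟪X, Y⟫)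
    (hJsq : ∀ X : V, J (J X) = -X)
    (W : Submodule ℝ V) [FiniteDimensional ℝ W]
    (T : V → V)
    (hT : ∀ X : V, T X = (W.orthogonalProjectionOnto (J X) : V))
    (θ : ℝ) (hθ : θ ∈ Set.Ioo 0 (Real.pi / 2))
    (hslant : ∀ X ∈ W, T (T X) = -((Real.cos θ) ^ 2 • X)) :
    ∀ X ∈ W, X ≠ 0 → ⟪J X, T X⟫ = Real.cos θ * ‖J X‖ * ‖T X‖ := by
  intro X hX hX0
  have hcos : 0 < Real.cos θ :=
    Real.cos_pos_of_mem_Ioo ⟨by linarith [hθ.1, Real.pi_pos], hθ.2⟩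
  have hTXW : T X ∈ W := by rw [hT]; exact (W.orthogonalProjectionOnto (J X)).2
  have hproj : ∀ v : V, ∀ w ∈ W, ⟪J v - T v, w⟫ = 0 := by
    intro v w hw
    rw [hT]
    exact W.starProjection_inner_eq_zero (J v) w hw
  -- ⟪JX, TX⟫ = ‖TX‖²
  have h1 : ⟪J X, T X⟫ = ‖T X‖ ^ 2 := by
    have h := hproj X (T X) hTXW
    rw [inner_sub_left, sub_eq_zero] at h
    rw [h, real_inner_self_eq_norm_sq]
  -- ⟪JX, TX⟫ = cos²θ ‖X‖²
  have h2 : ⟪J X, T X⟫ = Real.cos θ ^ 2 * ‖X‖ ^ 2 := by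
    have hortho : ⟪J (T X) - T (T X), X⟫ = 0 := hproj (T X) X hX
    rw [inner_sub_left, sub_eq_zero] at hortho
    have : ⟪J X, T X⟫ = -⟪X, J (T X)⟫ := by
      rw [← hJorth (J X) (T X), hJsq, inner_neg_left]
    rw [this, real_inner_comm, hortho, hslant X hX, inner_neg_left, inner_smul_left,
      neg_neg, real_inner_self_eq_norm_sq]
    simp
  have hJX : ‖J X‖ = ‖X‖ := by
    have := hJorth X X
    rw [real_inner_self_eq_norm_sq, real_inner_self_eq_norm_sq] at this
    nlinarith [norm_nonneg (J X), norm_nonneg X]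
  have hTX : ‖T X‖ = Real.cos θ * ‖X‖ := by
    have hsq : ‖T X‖ ^ 2 = (Real.cos θ * ‖X‖) ^ 2 := by rw [← h1, h2]; ring
    nlinarith [norm_nonneg (T X), norm_nonneg X, mul_nonneg hcos.le (norm_nonneg X)]
  rw [h2, hJX, hTX]; ring
end
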